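/- Let m, n be positive integers, r = min(m,n), Ω ⊆ {1,…,m}×{1,…,n} an index set, X a real m×n matrix, σ > 0 and λ > 0. Then the infimum over all real m×n matrices Z of (1/(2σ²))·Σ_{(i,j)∈Ω}(X_{ij} − Z_{ij})² + λ‖Z‖_* equals the infimum, over all tuples (d, α, β) with d ∈ ℝ^r, d_k ≥ 0, α_k ∈ ℝ^m, ‖α_k‖₂ ≤ 1, β_k ∈ ℝ^n, ‖β_k‖₂ ≤ 1 for all k ∈ {1,…,r}, of (1/(2σ²))·Σ_{(i,j)∈Ω}(X_{ij} − (Σ_{k=1}^r d_k α_k β_kᵀ)_{ij})² + λ·Σ_{k=1}^r d_k. (Theorem 1, equality of optimal values s = t of problems P1 and P2.) -/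

import Mathlib

open scoped BigOperators

/-- The nuclear norm of a real matrix: the sum of the square roots of the
eigenvalues of `Zᵀ * Z` (i.e. the sum of the singular values of `Z`). -/
noncomputable def nuclearNorm {m n : ℕ} (Z : Matrix (Fin m) (Fin n) ℝ) : ℝ :=
  ∑ j, Real.sqrt ((show (Matrix.transpose Z * Z).IsHermitian by
    simpa using Matrix.isHermitian_conjTranspose_mul_self Z).eigenvalues j)

/-- The Euclidean (ℓ²) norm of a vector in `ℝ^m`. -/
noncomputable def l2norm {m : ℕ} (x : Fin m → ℝ) : ℝ := Real.sqrt (∑ i, x i ^ 2)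

/-- `∑ k, d k • (α k) (β k)ᵀ`, a sum of scaled rank-one matrices. -/
noncomputable def rankOneSum {m n r : ℕ} (d : Fin r → ℝ) (α : Fin r → Fin m → ℝ)
    (β : Fin r → Fin n → ℝ) : Matrix (Fin m) (Fin n) ℝ :=
  ∑ k, d k • Matrix.vecMulVec (α k) (β k)

/-!
Both problems have the same data-fit term once `Z = ∑ₖ dₖ αₖ βₖᵀ`, so it suffices to compare
`‖Z‖_*` with `∑ₖ dₖ`. Writing `Z = ∑ⱼ sⱼ uⱼ vⱼᵀ` (singular value decomposition built from the
spectral decomposition of `Zᵀ Z`), only `rank Z ≤ min m n` of the `sⱼ` are nonzero, so every `Z`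
is feasible for the factored problem with `∑ₖ dₖ = ‖Z‖_*`. Conversely, for unit-ball factors,
`‖Z‖_* = ∑ⱼ uⱼ ⬝ Z vⱼ = ∑ₖ dₖ ∑ⱼ (uⱼ ⬝ αₖ)(vⱼ ⬝ βₖ) ≤ ∑ₖ dₖ` by Cauchy–Schwarz and Bessel's
inequality.
-/

open Matrix

theorem sum_sq_dotProduct_le_dotProduct_self {ι κ : Type*} [Fintype ι] [Fintype κ]
    (u : ι → κ → ℝ) (horth : Pairwise fun i j => u i ⬝ᵥ u j = 0)
    (hle : ∀ i, u i ⬝ᵥ u i ≤ 1) (x : κ → ℝ) :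
    ∑ i, (u i ⬝ᵥ x) ^ 2 ≤ x ⬝ᵥ x := by
  set P := ∑ i, (u i ⬝ᵥ x) • u i
  have hxP : x ⬝ᵥ P = ∑ i, (u i ⬝ᵥ x) ^ 2 := by
    simp only [P, dotProduct_sum, dotProduct_smul, smul_eq_mul, sq]
    exact Finset.sum_congr rfl fun i _ => by rw [dotProduct_comm x]
  have hPP : P ⬝ᵥ P ≤ ∑ i, (u i ⬝ᵥ x) ^ 2 := by
    have hdiag : P ⬝ᵥ P = ∑ i, (u i ⬝ᵥ x) ^ 2 * (u i ⬝ᵥ u i) := by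
      simp only [P, sum_dotProduct, dotProduct_sum, smul_dotProduct, dotProduct_smul, smul_eq_mul]
      refine Finset.sum_congr rfl fun i _ => ?_
      rw [Finset.sum_eq_single i (fun j _ hji => by rw [horth hji, mul_zero]) (by simp)]
      ring
    rw [hdiag]
    exact Finset.sum_le_sum fun i _ => mul_le_of_le_one_right (sq_nonneg _) (hle i)
  have hres : 0 ≤ (x - P) ⬝ᵥ (x - P) := Finset.sum_nonneg fun _ _ => mul_self_nonneg _
  rw [sub_dotProduct, dotProduct_sub, dotProduct_sub, dotProduct_comm P x, hxP] at hres
  linarith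

theorem sum_eq_sum_of_embedding {ι κ M : Type*} [Fintype ι] [Fintype κ] [AddCommMonoid M]
    {p : ι → Prop} (e : {i // p i} ↪ κ) {f : ι → M} {g : κ → M} (hf : ∀ i, ¬p i → f i = 0)
    (hg : ∀ k ∉ Set.range e, g k = 0) (hfg : ∀ i : {i // p i}, g (e i) = f i) :
    ∑ k, g k = ∑ i, f i := by
  classical
  rw [← Fintype.sum_of_injective e e.injective (fun i => f i) g hg fun i => (hfg i).symm,
    ← Finset.sum_subtype _ (fun i => Finset.mem_filter_univ i),
    Finset.sum_filter_of_ne fun i _ hi => not_not.1 (mt (hf i) hi)]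

theorem Function.extend_apply_of_forall {α β γ : Sort*} {f : α → β} {g : α → γ} {e' : β → γ}
    {P : γ → Prop} (hg : ∀ a, P (g a)) (he' : ∀ b, P (e' b)) (b : β) :
    P (Function.extend f g e' b) := by
  classical
  rw [Function.extend_def]
  split_ifs
  exacts [hg _, he' _]

theorem l2norm_eq_sqrt_dotProduct_self {m : ℕ} (x : Fin m → ℝ) : l2norm x = √(x ⬝ᵥ x) := by
  simp only [l2norm, dotProduct, sq]

theorem l2norm_le_one_iff {m : ℕ} (x : Fin m → ℝ) : l2norm x ≤ 1 ↔ x ⬝ᵥ x ≤ 1 := by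
  rw [l2norm_eq_sqrt_dotProduct_self, Real.sqrt_le_one]

theorem dotProduct_rankOneSum_mulVec {m n r : ℕ} (d : Fin r → ℝ) (α : Fin r → Fin m → ℝ)
    (β : Fin r → Fin n → ℝ) (a : Fin m → ℝ) (b : Fin n → ℝ) :
    a ⬝ᵥ (rankOneSum d α β *ᵥ b) = ∑ k, d k * ((a ⬝ᵥ α k) * (β k ⬝ᵥ b)) := by
  simp only [rankOneSum, sum_mulVec, smul_mulVec, vecMulVec_mulVec, op_smul_eq_smul,
    dotProduct_sum, dotProduct_smul, smul_eq_mul]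
  exact Finset.sum_congr rfl fun k _ => by ring

theorem posSemidef_transpose_mul_self {m n : Type*} [Fintype m] [Fintype n]
    (Z : Matrix m n ℝ) : (Zᵀ * Z).PosSemidef := by
  simpa [conjTranspose_eq_transpose_of_trivial] using posSemidef_conjTranspose_mul_self Z

section SingularValueDecomposition

variable {m n : ℕ} (Z : Matrix (Fin m) (Fin n) ℝ)

noncomputable def singularValue (j : Fin n) : ℝ :=
  √((posSemidef_transpose_mul_self Z).isHermitian.eigenvalues j)

noncomputable def rightSingularVector (j : Fin n) : Fin n → ℝ :=
  WithLp.ofLp ((posSemidef_transpose_mul_self Z).isHermitian.eigenvectorBasis j)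

-- For `sⱼ = 0` this is `0⁻¹ • Z vⱼ = 0`, so the nonzero left singular vectors are orthonormal
-- and the others vanish.
noncomputable def leftSingularVector (j : Fin n) : Fin m → ℝ :=
  (singularValue Z j)⁻¹ • (Z *ᵥ rightSingularVector Z j)

theorem nuclearNorm_eq_sum_singularValue : nuclearNorm Z = ∑ j, singularValue Z j := rfl

theorem singularValue_nonneg (j : Fin n) : 0 ≤ singularValue Z j := Real.sqrt_nonneg _

theorem sq_singularValue (j : Fin n) :
    singularValue Z j ^ 2 = (posSemidef_transpose_mul_self Z).isHermitian.eigenvalues j :=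
  Real.sq_sqrt ((posSemidef_transpose_mul_self Z).eigenvalues_nonneg j)

theorem rightSingularVector_dotProduct (i j : Fin n) :
    rightSingularVector Z i ⬝ᵥ rightSingularVector Z j = if i = j then 1 else 0 := by
  have := orthonormal_iff_ite.mp
    (posSemidef_transpose_mul_self Z).isHermitian.eigenvectorBasis.orthonormal j i
  rw [EuclideanSpace.inner_eq_star_dotProduct, star_trivial] at this
  simpa [rightSingularVector, eq_comm] using this

theorem sum_vecMulVec_rightSingularVector :
    ∑ j, vecMulVec (rightSingularVector Z j) (rightSingularVector Z j) = 1 := by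
  have hU := Unitary.coe_mul_star_self
    (posSemidef_transpose_mul_self Z).isHermitian.eigenvectorUnitary
  rw [Unitary.coe_star, star_eq_conjTranspose, conjTranspose_eq_transpose_of_trivial] at hU
  rw [← hU]
  ext a b
  simp [mul_apply, vecMulVec_apply, Matrix.sum_apply, rightSingularVector]

theorem transpose_mul_self_mulVec_rightSingularVector (j : Fin n) :
    (Zᵀ * Z) *ᵥ rightSingularVector Z j = singularValue Z j ^ 2 • rightSingularVector Z j := by
  rw [sq_singularValue]
  exact (posSemidef_transpose_mul_self Z).isHermitian.mulVec_eigenvectorBasis j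

theorem mulVec_rightSingularVector_dotProduct (i j : Fin n) :
    (Z *ᵥ rightSingularVector Z i) ⬝ᵥ (Z *ᵥ rightSingularVector Z j)
      = if i = j then singularValue Z j ^ 2 else 0 := by
  rw [dotProduct_mulVec, vecMul_mulVec, ← mulVec_transpose, transpose_mul, transpose_transpose,
    transpose_mul_self_mulVec_rightSingularVector, smul_dotProduct, rightSingularVector_dotProduct]
  split_ifs with h
  · subst h; simp
  · simp

theorem mulVec_rightSingularVector (j : Fin n) :
    Z *ᵥ rightSingularVector Z j = singularValue Z j • leftSingularVector Z j := by
  rcases eq_or_ne (singularValue Z j) 0 with h | h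
  · have := mulVec_rightSingularVector_dotProduct Z j j
    rw [if_pos rfl, h, zero_pow two_ne_zero, dotProduct_self_eq_zero] at this
    rw [this, h, zero_smul]
  · rw [leftSingularVector, smul_smul, mul_inv_cancel₀ h, one_smul]

theorem leftSingularVector_dotProduct (i j : Fin n) :
    leftSingularVector Z i ⬝ᵥ leftSingularVector Z j
      = if i = j then (singularValue Z j)⁻¹ ^ 2 * singularValue Z j ^ 2 else 0 := by
  simp only [leftSingularVector, smul_dotProduct, dotProduct_smul,
    mulVec_rightSingularVector_dotProduct, smul_eq_mul]
  split_ifs with h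
  · subst h; ring
  · simp

theorem leftSingularVector_dotProduct_of_ne {i j : Fin n} (h : i ≠ j) :
    leftSingularVector Z i ⬝ᵥ leftSingularVector Z j = 0 := by
  rw [leftSingularVector_dotProduct, if_neg h]

theorem leftSingularVector_dotProduct_self_le_one (j : Fin n) :
    leftSingularVector Z j ⬝ᵥ leftSingularVector Z j ≤ 1 := by
  rw [leftSingularVector_dotProduct, if_pos rfl, ← mul_pow, inv_mul_eq_div]
  rcases eq_or_ne (singularValue Z j) 0 with h | h <;> simp [h]

theorem singularValue_eq_dotProduct_mulVec (j : Fin n) :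
    singularValue Z j = leftSingularVector Z j ⬝ᵥ (Z *ᵥ rightSingularVector Z j) := by
  rw [mulVec_rightSingularVector, dotProduct_smul, leftSingularVector_dotProduct, if_pos rfl,
    smul_eq_mul, ← mul_pow, inv_mul_eq_div]
  rcases eq_or_ne (singularValue Z j) 0 with h | h
  · rw [h, zero_mul]
  · rw [div_self h, one_pow, mul_one]

theorem sum_singularValue_smul_vecMulVec :
    ∑ j, singularValue Z j • vecMulVec (leftSingularVector Z j) (rightSingularVector Z j) = Z := by
  calc _ = ∑ j, Z * vecMulVec (rightSingularVector Z j) (rightSingularVector Z j) :=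
        Finset.sum_congr rfl fun j _ => by
          rw [mul_vecMulVec, mulVec_rightSingularVector, smul_vecMulVec]
    _ = Z := by rw [← Matrix.mul_sum, sum_vecMulVec_rightSingularVector, Matrix.mul_one]

theorem card_singularValue_ne_zero : Fintype.card {j // singularValue Z j ≠ 0} = Z.rank := by
  rw [← rank_transpose_mul_self,
    (posSemidef_transpose_mul_self Z).isHermitian.rank_eq_card_non_zero_eigs]
  refine Fintype.card_congr (Equiv.subtypeEquivRight fun j => ?_)
  rw [singularValue, ne_eq,
    Real.sqrt_eq_zero ((posSemidef_transpose_mul_self Z).eigenvalues_nonneg j)]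

theorem sum_leftSingularVector_dotProduct_mul_le_one {a : Fin m → ℝ} {b : Fin n → ℝ}
    (ha : a ⬝ᵥ a ≤ 1) (hb : b ⬝ᵥ b ≤ 1) :
    ∑ j, (leftSingularVector Z j ⬝ᵥ a) * (rightSingularVector Z j ⬝ᵥ b) ≤ 1 := by
  have hu := sum_sq_dotProduct_le_dotProduct_self (leftSingularVector Z)
    (fun _ _ h => leftSingularVector_dotProduct_of_ne Z h)
    (leftSingularVector_dotProduct_self_le_one Z) a
  have hv := sum_sq_dotProduct_le_dotProduct_self (rightSingularVector Z)
    (fun i j h => (rightSingularVector_dotProduct Z i j).trans (if_neg h))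
    (fun _ => by rw [rightSingularVector_dotProduct, if_pos rfl]) b
  calc _ ≤ √(∑ j, (leftSingularVector Z j ⬝ᵥ a) ^ 2)
          * √(∑ j, (rightSingularVector Z j ⬝ᵥ b) ^ 2) := Real.sum_mul_le_sqrt_mul_sqrt _ _ _
    _ ≤ 1 := mul_le_one₀ (Real.sqrt_le_one.2 (hu.trans ha)) (Real.sqrt_nonneg _)
        (Real.sqrt_le_one.2 (hv.trans hb))

end SingularValueDecomposition

theorem nuclearNorm_rankOneSum_le {m n r : ℕ} {d : Fin r → ℝ} {α : Fin r → Fin m → ℝ}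
    {β : Fin r → Fin n → ℝ} (hd : ∀ k, 0 ≤ d k) (hα : ∀ k, l2norm (α k) ≤ 1)
    (hβ : ∀ k, l2norm (β k) ≤ 1) :
    nuclearNorm (rankOneSum d α β) ≤ ∑ k, d k := by
  set Z := rankOneSum d α β
  have hs : ∀ j, singularValue Z j
      = ∑ k, d k * ((leftSingularVector Z j ⬝ᵥ α k) * (rightSingularVector Z j ⬝ᵥ β k)) := by
    intro j
    rw [singularValue_eq_dotProduct_mulVec]
    simp only [Z, dotProduct_rankOneSum_mulVec, dotProduct_comm (β _)]
  calc nuclearNorm Z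
      = ∑ k, d k * ∑ j, (leftSingularVector Z j ⬝ᵥ α k) * (rightSingularVector Z j ⬝ᵥ β k) := by
        simp only [nuclearNorm_eq_sum_singularValue, hs, Finset.mul_sum]
        exact Finset.sum_comm
    _ ≤ ∑ k, d k * 1 := by
        gcongr with k
        · exact hd k
        · exact sum_leftSingularVector_dotProduct_mul_le_one Z ((l2norm_le_one_iff _).1 (hα k))
            ((l2norm_le_one_iff _).1 (hβ k))
    _ = ∑ k, d k := by simp only [mul_one]

theorem exists_rankOneSum_eq_of_rank_le {m n r : ℕ} (Z : Matrix (Fin m) (Fin n) ℝ)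
    (hr : Z.rank ≤ r) :
    ∃ (d : Fin r → ℝ) (α : Fin r → Fin m → ℝ) (β : Fin r → Fin n → ℝ),
      (∀ k, 0 ≤ d k) ∧ (∀ k, l2norm (α k) ≤ 1) ∧ (∀ k, l2norm (β k) ≤ 1) ∧
      rankOneSum d α β = Z ∧ ∑ k, d k = nuclearNorm Z := by
  obtain ⟨e⟩ : Nonempty ({j // singularValue Z j ≠ 0} ↪ Fin r) :=
    Function.Embedding.nonempty_of_card_le (by rwa [card_singularValue_ne_zero, Fintype.card_fin])
  let d := Function.extend e (fun j => singularValue Z j) 0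
  let α := Function.extend e (fun j => leftSingularVector Z j) 0
  let β := Function.extend e (fun j => rightSingularVector Z j) 0
  have hd : ∀ k ∉ Set.range e, d k = 0 := fun k hk => Function.extend_apply' _ _ _ hk
  refine ⟨d, α, β, fun k => ?_, fun k => ?_, fun k => ?_, ?_, ?_⟩
  · exact Function.extend_apply_of_forall (P := (0 ≤ ·)) (fun _ => singularValue_nonneg Z _)
      (fun _ => le_rfl) k
  · refine Function.extend_apply_of_forall (P := (l2norm · ≤ 1)) (fun j => ?_) (fun _ => ?_) k
    · exact (l2norm_le_one_iff _).2 (leftSingularVector_dotProduct_self_le_one Z j)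
    · simp [l2norm]
  · refine Function.extend_apply_of_forall (P := (l2norm · ≤ 1)) (fun j => ?_) (fun _ => ?_) k
    · rw [l2norm_le_one_iff, rightSingularVector_dotProduct, if_pos rfl]
    · simp [l2norm]
  · rw [rankOneSum, ← sum_singularValue_smul_vecMulVec Z]
    refine sum_eq_sum_of_embedding e (fun j hj => by rw [not_not.1 hj, zero_smul])
      (fun k hk => by rw [hd k hk, zero_smul]) fun j => ?_
    simp only [d, α, β, e.injective.extend_apply]
  · rw [nuclearNorm_eq_sum_singularValue]
    exact sum_eq_sum_of_embedding e (fun j hj => not_not.1 hj) hd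
      fun j => e.injective.extend_apply _ _ j

theorem relaxed_spectral_regularization_equal_optimal_values_general
    (m n : ℕ) (r : ℕ) (hr : r = min m n)
    (Ω : Finset (Fin m × Fin n)) (X : Matrix (Fin m) (Fin n) ℝ)
    (σ lam : ℝ) (hlam : 0 < lam) :
    sInf {v : ℝ | ∃ Z : Matrix (Fin m) (Fin n) ℝ,
        v = (1 / (2 * σ ^ 2)) * ∑ p ∈ Ω, (X p.1 p.2 - Z p.1 p.2) ^ 2
            + lam * nuclearNorm Z}
    = sInf {v : ℝ | ∃ (d : Fin r → ℝ) (α : Fin r → Fin m → ℝ) (β : Fin r → Fin n → ℝ),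
        (∀ k, 0 ≤ d k) ∧ (∀ k, l2norm (α k) ≤ 1) ∧ (∀ k, l2norm (β k) ≤ 1) ∧
        v = (1 / (2 * σ ^ 2)) * ∑ p ∈ Ω, (X p.1 p.2 - rankOneSum d α β p.1 p.2) ^ 2
            + lam * ∑ k, d k} := by
  refine csInf_eq_csInf_of_forall_exists_le ?_ ?_
  · rintro _ ⟨Z, rfl⟩
    have hrank : Z.rank ≤ r := hr ▸ le_min
      (by simpa using Z.rank_le_card_height) (by simpa using Z.rank_le_card_width)
    obtain ⟨d, α, β, hd, hα, hβ, hZ, hsum⟩ := exists_rankOneSum_eq_of_rank_le Z hrank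
    exact ⟨_, ⟨d, α, β, hd, hα, hβ, rfl⟩, by rw [hZ, hsum]⟩
  · rintro _ ⟨d, α, β, hd, hα, hβ, rfl⟩
    refine ⟨_, ⟨rankOneSum d α β, rfl⟩, ?_⟩
    gcongr
    exact nuclearNorm_rankOneSum_le hd hα hβ

theorem relaxed_spectral_regularization_equal_optimal_values
    (m n : ℕ) (hm : 0 < m) (hn : 0 < n) (r : ℕ) (hr : r = min m n)
    (Ω : Finset (Fin m × Fin n)) (X : Matrix (Fin m) (Fin n) ℝ)
    (σ lam : ℝ) (hσ : 0 < σ) (hlam : 0 < lam) :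
    sInf {v : ℝ | ∃ Z : Matrix (Fin m) (Fin n) ℝ,
        v = (1 / (2 * σ ^ 2)) * ∑ p ∈ Ω, (X p.1 p.2 - Z p.1 p.2) ^ 2
            + lam * nuclearNorm Z}
    = sInf {v : ℝ | ∃ (d : Fin r → ℝ) (α : Fin r → Fin m → ℝ) (β : Fin r → Fin n → ℝ),
        (∀ k, 0 ≤ d k) ∧ (∀ k, l2norm (α k) ≤ 1) ∧ (∀ k, l2norm (β k) ≤ 1) ∧
        v = (1 / (2 * σ ^ 2)) * ∑ p ∈ Ω, (X p.1 p.2 - rankOneSum d α β p.1 p.2) ^ 2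
            + lam * ∑ k, d k} :=
  relaxed_spectral_regularization_equal_optimal_values_general m n r hr Ω X σ lam hlam
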